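/- arXiv:math/0604575 — 5 statements merged into one kernel-verified Lean document; each statement's English description precedes it below -/
import Mathlib

section
/- Let G be a topological group that is Steinhaus, and let π : G → H be a group homomorphism into a separable topological group H. Then π is continuous. -/
open Pointwise in
/-- A topological group `G` is *Steinhaus with exponent `k`* if for every symmetric set
`W ⊆ G` (`W = W⁻¹`) which is countably syndetic (`G` is covered by countably many left
translates of `W`), the set `W ^ k` contains an open neighbourhood of the identity. -/
def IsSteinhausWith (G : Type*) [Group G] [TopologicalSpace G] (k : ℕ) : Prop :=
  ∀ W : Set G, W = W⁻¹ → (∃ g : ℕ → G, (⋃ n : ℕ, g n • W) = Set.univ) →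
    ∃ U : Set G, IsOpen U ∧ (1 : G) ∈ U ∧ U ⊆ W ^ k

/-- A topological group is *Steinhaus* if it is Steinhaus with some exponent `k ≥ 1`. -/
def IsSteinhaus (G : Type*) [Group G] [TopologicalSpace G] : Prop :=
  ∃ k : ℕ, 1 ≤ k ∧ IsSteinhausWith G k

/-!
Given a neighbourhood `V` of `1` in `H`, choose an open `U ∋ 1` with `(U⁻¹ * U) ^ k ⊆ V`.
By separability `H` is covered by countably many translates `dₙ • U`; picking `gₙ ∈ G` with
`π gₙ ∈ dₙ • U` whenever possible, the symmetric set `W = π ⁻¹' (U⁻¹ * U)` satisfies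
`G = ⋃ₙ gₙ • W`. The Steinhaus property makes `W ^ k` a neighbourhood of `1`, and
`π (W ^ k) ⊆ V`, so `π` is continuous at `1`.
-/

open Pointwise Set Topology

theorem exists_open_nhds_one_pow_subset {M : Type*} [Monoid M] [TopologicalSpace M]
    [ContinuousMul M] (n : ℕ) {V : Set M} (hV : V ∈ 𝓝 (1 : M)) :
    ∃ U : Set M, IsOpen U ∧ (1 : M) ∈ U ∧ U ^ n ⊆ V := by
  induction n generalizing V with
  | zero => exact ⟨univ, isOpen_univ, trivial, by simpa using mem_of_mem_nhds hV⟩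
  | succ n ih =>
    obtain ⟨S, hSo, hS1, hSV⟩ := exists_open_nhds_one_mul_subset hV
    obtain ⟨U, hUo, hU1, hUS⟩ := ih (hSo.mem_nhds hS1)
    refine ⟨U ∩ S, hUo.inter hSo, ⟨hU1, hS1⟩, ?_⟩
    calc (U ∩ S) ^ (n + 1) = (U ∩ S) ^ n * (U ∩ S) := pow_succ _ _
      _ ⊆ U ^ n * S := mul_subset_mul (pow_subset_pow_left inter_subset_left) inter_subset_right
      _ ⊆ S * S := mul_subset_mul_right hUS
      _ ⊆ V := hSV

theorem exists_open_nhds_one_inv_mul_pow_subset {G : Type*} [Group G] [TopologicalSpace G]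
    [IsTopologicalGroup G] (n : ℕ) {V : Set G} (hV : V ∈ 𝓝 (1 : G)) :
    ∃ U : Set G, IsOpen U ∧ (1 : G) ∈ U ∧ (U⁻¹ * U) ^ n ⊆ V := by
  obtain ⟨U, hUo, hU1, hUV⟩ := exists_open_nhds_one_pow_subset (2 * n) hV
  refine ⟨U ∩ U⁻¹, hUo.inter hUo.inv, ⟨hU1, by simpa using hU1⟩, ?_⟩
  have hinv : (U ∩ U⁻¹)⁻¹ ⊆ U := by
    rw [inter_inv, inv_inv]
    exact inter_subset_right
  calc ((U ∩ U⁻¹)⁻¹ * (U ∩ U⁻¹)) ^ n ⊆ (U * U) ^ n :=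
        pow_subset_pow_left (mul_subset_mul hinv inter_subset_left)
    _ = U ^ (2 * n) := by rw [← sq, ← pow_mul]
    _ ⊆ V := hUV

theorem IsOpen.exists_iUnion_smul_eq_univ {H : Type*} [Group H] [TopologicalSpace H]
    [IsTopologicalGroup H] [TopologicalSpace.SeparableSpace H] {U : Set H} (hU : IsOpen U)
    (hne : U.Nonempty) : ∃ d : ℕ → H, ⋃ n, d n • U = univ := by
  have : Nonempty H := ⟨1⟩
  refine ⟨TopologicalSpace.denseSeq H, eq_univ_of_forall fun y => ?_⟩
  obtain ⟨n, u, hu, hyu⟩ := (TopologicalSpace.denseRange_denseSeq H).exists_mem_open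
    (hU.inv.smul y) (hne.inv.smul_set (a := y))
  exact mem_iUnion.mpr ⟨n, u⁻¹, hu, by simp [← hyu]⟩

theorem MonoidHom.exists_iUnion_smul_preimage_inv_mul_eq_univ {G H ι : Type*} [Group G]
    [Group H] (π : G →* H) {U : Set H} {d : ι → H} (hd : ⋃ i, d i • U = univ) :
    ∃ g : ι → G, ⋃ i, g i • π ⁻¹' (U⁻¹ * U) = univ := by
  refine ⟨fun i => Classical.epsilon fun g => π g ∈ d i • U, eq_univ_of_forall fun x => ?_⟩
  obtain ⟨i, hxi⟩ := mem_iUnion.mp (hd ▸ mem_univ (π x))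
  have hgi := Classical.epsilon_spec (p := fun g => π g ∈ d i • U) ⟨x, hxi⟩
  rw [mem_smul_set_iff_inv_smul_mem, smul_eq_mul] at hxi hgi
  refine mem_iUnion.mpr ⟨i, mem_smul_set_iff_inv_smul_mem.mpr ?_⟩
  -- `π (gᵢ⁻¹ * x) = (dᵢ⁻¹ * π gᵢ)⁻¹ * (dᵢ⁻¹ * π x)`
  have hmem := mul_mem_mul (inv_mem_inv.mpr hgi) hxi
  simpa [mul_assoc] using hmem

/-- Any homomorphism from a Steinhaus topological group into a separable topological
group is continuous. -/
theorem continuous_of_isSteinhaus {G H : Type*}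
    [Group G] [TopologicalSpace G] [IsTopologicalGroup G]
    [Group H] [TopologicalSpace H] [IsTopologicalGroup H]
    [TopologicalSpace.SeparableSpace H]
    (hG : IsSteinhaus G) (π : G →* H) : Continuous π := by
  obtain ⟨k, -, hk⟩ := hG
  refine continuous_of_continuousAt_one π fun V hV => Filter.mem_map.mpr ?_
  rw [map_one] at hV
  obtain ⟨U, hUo, hU1, hUV⟩ := exists_open_nhds_one_inv_mul_pow_subset k hV
  obtain ⟨d, hd⟩ := hUo.exists_iUnion_smul_eq_univ ⟨1, hU1⟩
  set W := π ⁻¹' (U⁻¹ * U)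
  have hW : W = W⁻¹ := by
    ext x
    rw [mem_inv, mem_preimage, mem_preimage, map_inv, ← mem_inv, mul_inv_rev, inv_inv]
  obtain ⟨O, hOo, hO1, hOW⟩ := hk W hW (π.exists_iUnion_smul_preimage_inv_mul_eq_univ hd)
  exact Filter.mem_of_superset (hOo.mem_nhds hO1)
    (hOW.trans ((preimage_pow_subset π _ k).trans (preimage_mono hUV)))
end

section
/- Let G and H be Polish groups (separable, completely metrizable topological groups). If G is Steinhaus and there exists a surjective group homomorphism from G onto H, then H is Steinhaus. -/
/-!
A surjective homomorphism `π : G →* H` out of a Steinhaus group is automatically continuous: a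
symmetric neighbourhood `W` of `1` in the separable group `H` is countably syndetic, hence so is
`π ⁻¹' W`, and then `(π ⁻¹' W) ^ k ⊆ π ⁻¹' (W ^ k)` is a neighbourhood of `1`.

A continuous surjective homomorphism of Polish groups is open at `1`: for open `W`, the set
`π '' W` is Borel by Suslin's theorem, because its preimage `W * ker π` is open; it is non-meagre
because it is countably syndetic, so by Pettis' lemma `(π '' W)⁻¹ * π '' W` is a neighbourhood
of `1`. Hence if `W ⊆ H` is symmetric and countably syndetic, so is `π ⁻¹' W`, and `π` maps the
neighbourhood of `1` inside `(π ⁻¹' W) ^ k` to one inside `W ^ k`.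
-/

open Set Filter Topology Pointwise

def IsCountablySyndetic {G : Type*} [Group G] (W : Set G) : Prop :=
  ∃ g : ℕ → G, (⋃ n : ℕ, g n • W) = univ

theorem IsMeagre.of_residualEq {X : Type*} [TopologicalSpace X] {s t : Set X} (h : s =ᵇ t)
    (ht : IsMeagre t) : IsMeagre s := by
  filter_upwards [eventuallyEq_set.1 h, ht] with x hst hxt hxs using hxt (hst.1 hxs)

section Group

variable {G H : Type*} [Group G] [Group H]

theorem IsCountablySyndetic.image {W : Set G} (hW : IsCountablySyndetic W) (π : G →* H)
    (hπ : Function.Surjective π) : IsCountablySyndetic (π '' W) := by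
  obtain ⟨g, hg⟩ := hW
  refine ⟨fun n => π (g n), ?_⟩
  rw [← hπ.range_eq, ← image_univ, ← hg, image_iUnion]
  simp only [image_smul_distrib]

theorem IsCountablySyndetic.preimage {W : Set H} (hW : IsCountablySyndetic W) (π : G →* H)
    (hπ : Function.Surjective π) : IsCountablySyndetic (π ⁻¹' W) := by
  obtain ⟨g, hg⟩ := hW
  choose g' hg' using fun n => hπ (g n)
  refine ⟨g', eq_univ_of_forall fun x => ?_⟩
  obtain ⟨n, hn⟩ := mem_iUnion.1 (hg.symm ▸ mem_univ (π x) : π x ∈ ⋃ n, g n • W)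
  refine mem_iUnion.2 ⟨n, ?_⟩
  rw [mem_smul_set_iff_inv_smul_mem] at hn ⊢
  simpa [hg'] using hn

theorem MonoidHom.preimage_inv (π : G →* H) (s : Set H) : π ⁻¹' s⁻¹ = (π ⁻¹' s)⁻¹ := by
  ext
  simp

theorem MonoidHom.preimage_image_eq_mul_ker (π : G →* H) (s : Set G) :
    π ⁻¹' (π '' s) = s * (π.ker : Set G) := by
  ext x
  constructor
  · rintro ⟨w, hw, hwx⟩
    exact ⟨w, hw, w⁻¹ * x, by simp [hwx], by group⟩
  · rintro ⟨w, hw, k, hk, rfl⟩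
    exact ⟨w, hw, by simp [(MonoidHom.mem_ker).1 hk]⟩

end Group

section TopologicalGroup

variable {G : Type*} [Group G] [TopologicalSpace G] [IsTopologicalGroup G]

theorem isCountablySyndetic_of_mem_nhds [TopologicalSpace.SeparableSpace G] {V : Set G}
    (hV : V ∈ 𝓝 (1 : G)) : IsCountablySyndetic V := by
  obtain ⟨u, hu⟩ := TopologicalSpace.exists_dense_seq G
  refine ⟨u, eq_univ_of_forall fun x => ?_⟩
  obtain ⟨n, hn⟩ := hu.exists_mem_open (s := {y | y⁻¹ * x ∈ interior V})
    (isOpen_interior.preimage (continuous_inv.mul continuous_const)) ⟨x, by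
      simpa using mem_interior_iff_mem_nhds.2 hV⟩
  exact mem_iUnion.2 ⟨n, mem_smul_set_iff_inv_smul_mem.2 (interior_subset hn)⟩

theorem IsCountablySyndetic.not_isMeagre [BaireSpace G] {W : Set G}
    (hW : IsCountablySyndetic W) : ¬IsMeagre W := by
  obtain ⟨g, hg⟩ := hW
  intro hmeagre
  refine not_isMeagre_of_isOpen (isOpen_univ (X := G)) univ_nonempty ?_
  rw [← hg]
  refine isMeagre_iUnion fun n => ?_
  rw [← preimage_smul_inv]
  exact hmeagre.preimage_of_isOpenMap (continuous_const_smul _) (isOpenMap_smul _)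

theorem exists_mem_nhds_one_inv_eq_pow_subset (k : ℕ) {U : Set G} (hU : U ∈ 𝓝 (1 : G)) :
    ∃ W ∈ 𝓝 (1 : G), W = W⁻¹ ∧ W ^ k ⊆ U := by
  suffices ∃ V ∈ 𝓝 (1 : G), V ^ k ⊆ U by
    obtain ⟨V, hV, hVU⟩ := this
    exact ⟨V ∩ V⁻¹, inter_mem hV (inv_mem_nhds_one G hV), by simp [inter_comm],
      (pow_subset_pow_left inter_subset_left).trans hVU⟩
  induction k generalizing U with
  | zero => exact ⟨univ, univ_mem, by simpa using mem_of_mem_nhds hU⟩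
  | succ k ih =>
    obtain ⟨V₁, hV₁o, hV₁, hV₁U⟩ := exists_open_nhds_one_mul_subset hU
    obtain ⟨V₂, hV₂, hV₂V₁⟩ := ih (hV₁o.mem_nhds hV₁)
    refine ⟨V₁ ∩ V₂, inter_mem (hV₁o.mem_nhds hV₁) hV₂, ?_⟩
    rw [pow_succ]
    exact (mul_subset_mul ((pow_subset_pow_left inter_subset_right).trans hV₂V₁)
      inter_subset_left).trans hV₁U

theorem BaireMeasurableSet.inv_mul_mem_nhds_one [BaireSpace G] {A : Set G}
    (hA : BaireMeasurableSet A) (hA' : ¬IsMeagre A) : A⁻¹ * A ∈ 𝓝 (1 : G) := by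
  obtain ⟨O, hO, hAO⟩ := hA.residualEq_isOpen
  obtain ⟨q, hq⟩ : O.Nonempty := nonempty_of_not_isMeagre fun h => hA' (h.of_residualEq hAO)
  refine mem_of_superset ((hO.preimage (continuous_const_mul q)).mem_nhds (by simpa))
    fun h hh => ?_
  have hshift : (· * h) ⁻¹' A =ᵇ (· * h) ⁻¹' O :=
    hAO.comp_tendsto <|
      tendsto_residual_of_isOpenMap (continuous_mul_const h) (isOpenMap_mul_right h)
  have hOO : ¬IsMeagre (O ∩ (· * h) ⁻¹' O) :=
    not_isMeagre_of_isOpen (hO.inter (hO.preimage (continuous_mul_const h))) ⟨q, hq, hh⟩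
  obtain ⟨x, hxA, hxhA⟩ := nonempty_of_not_isMeagre fun hm =>
    hOO (hm.of_residualEq (hAO.inter hshift).symm)
  exact ⟨x⁻¹, inv_mem_inv.2 hxA, x * h, hxhA, by group⟩

end TopologicalGroup

theorem MonoidHom.baireMeasurableSet_image {G H : Type*} [Group G] [TopologicalSpace G]
    [IsTopologicalGroup G] [PolishSpace G] [Group H] [TopologicalSpace H] [PolishSpace H]
    (π : G →* H) (hc : Continuous π) (hπ : Function.Surjective π) {W : Set G} (hW : IsOpen W) :
    BaireMeasurableSet (π '' W) := by
  borelize G H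
  refine MeasurableSet.baireMeasurableSet ?_
  rw [← hc.measurable.measurableSet_preimage_iff_of_surjective hπ, π.preimage_image_eq_mul_ker]
  exact hW.mul_right.measurableSet

section PolishGroup

variable {G H : Type*} [Group G] [TopologicalSpace G] [IsTopologicalGroup G]
  [Group H] [TopologicalSpace H] [IsTopologicalGroup H]

theorem IsSteinhausWith.continuous_of_surjective [TopologicalSpace.SeparableSpace H] {k : ℕ}
    (hG : IsSteinhausWith G k) (π : G →* H) (hπ : Function.Surjective π) : Continuous π := by
  refine continuous_of_continuousAt_one π ?_
  rw [ContinuousAt, map_one]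
  intro U hU
  obtain ⟨W, hW, hWinv, hWU⟩ := exists_mem_nhds_one_inv_eq_pow_subset k hU
  obtain ⟨O, hOo, hO1, hOW⟩ := hG (π ⁻¹' W) (by rw [← π.preimage_inv, ← hWinv])
    ((isCountablySyndetic_of_mem_nhds hW).preimage π hπ)
  exact mem_map.2 <| mem_of_superset (hOo.mem_nhds hO1)
    (hOW.trans ((preimage_pow_subset π W k).trans (preimage_mono hWU)))

theorem MonoidHom.image_mem_nhds_one [PolishSpace G] [PolishSpace H] (π : G →* H)
    (hc : Continuous π) (hπ : Function.Surjective π) {U : Set G} (hU : U ∈ 𝓝 (1 : G)) :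
    π '' U ∈ 𝓝 (1 : H) := by
  obtain ⟨V, hV, -, hVinv, hVU⟩ := exists_closed_nhds_one_inv_eq_mul_subset hU
  have hWU : (π '' interior V)⁻¹ * π '' interior V ⊆ π '' U := by
    rw [← image_inv, ← image_mul]
    exact image_mono <| (mul_subset_mul ((inv_subset_inv.2 interior_subset).trans hVinv.subset)
      interior_subset).trans hVU
  refine mem_of_superset ((π.baireMeasurableSet_image hc hπ isOpen_interior).inv_mul_mem_nhds_one
    ?_) hWU
  exact ((isCountablySyndetic_of_mem_nhds (interior_mem_nhds.2 hV)).image π hπ).not_isMeagre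

theorem IsSteinhausWith.of_surjective [PolishSpace G] [PolishSpace H] {k : ℕ}
    (hG : IsSteinhausWith G k) (π : G →* H) (hπ : Function.Surjective π) :
    IsSteinhausWith H k := by
  intro W hW hWsynd
  obtain ⟨U, hUo, hU1, hUW⟩ := hG (π ⁻¹' W) (by rw [← π.preimage_inv, ← hW])
    (IsCountablySyndetic.preimage hWsynd π hπ)
  obtain ⟨O, hOU, hOo, hO1⟩ := mem_nhds_iff.1 <|
    π.image_mem_nhds_one (hG.continuous_of_surjective π hπ) hπ (hUo.mem_nhds hU1)
  refine ⟨O, hOo, hO1, hOU.trans ?_⟩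
  calc π '' U ⊆ π '' ((π ⁻¹' W) ^ k) := image_mono hUW
    _ = (π '' (π ⁻¹' W)) ^ k := image_pow π _ k
    _ ⊆ W ^ k := pow_subset_pow_left (image_preimage_subset _ _)

end PolishGroup

/-- If `G` and `H` are Polish groups, `G` is Steinhaus and `H` is the image of `G` under a
(surjective) group homomorphism, then `H` is Steinhaus. -/
theorem isSteinhaus_of_surjective_hom {G H : Type*}
    [Group G] [TopologicalSpace G] [IsTopologicalGroup G] [PolishSpace G]
    [Group H] [TopologicalSpace H] [IsTopologicalGroup H] [PolishSpace H]
    (hG : IsSteinhaus G) (π : G →* H) (hπ : Function.Surjective π) :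
    IsSteinhaus H := by
  obtain ⟨k, hk, hG⟩ := hG
  exact ⟨k, hk, hG.of_surjective π hπ⟩
end

section
/- Let G be a Polish group which has the Bergman property and has a comeagre conjugacy class. Then every group homomorphism from G (as an abstract group) into a locally compact Polish group H is trivial: it sends every element of G to the identity of H. -/
/-!
By the Bergman property, the covering of `G` by the preimages of an exhausting sequence of
compact subsets of `H` shows that `π(G)` lies in a power of a compact set, so its closure `K`
is a compact subgroup. Taking the sup over `K` of `dist (k x k⁻¹) 1` gives a continuous function
on `H` that vanishes only at `1` and is invariant under conjugation by `π(G)`. Such a function is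
constant on `π(G)`: a comeagre set meets countably many translates of the comeagre conjugacy
class, so some `π c` translates a dense subset of `π(G)` into the image of that class.
-/

open Pointwise

def HasBergmanProperty (G : Type*) [Group G] : Prop :=
  ∀ W : ℕ → Set G, (∀ n : ℕ, W n ⊆ W (n + 1)) → (⋃ n : ℕ, W n) = Set.univ →
    ∃ n k : ℕ, W n ^ k = Set.univ

theorem IsCompact.pow {M : Type*} [Monoid M] [TopologicalSpace M] [ContinuousMul M]
    {s : Set M} (hs : IsCompact s) : ∀ k : ℕ, IsCompact (s ^ k)
  | 0 => by simpa only [pow_zero, ← Set.singleton_one] using isCompact_singleton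
  | k + 1 => by simpa only [pow_succ] using (hs.pow k).mul hs

theorem HasBergmanProperty.isCompact_closure_range {G H : Type*} [Group G]
    (hG : HasBergmanProperty G) [Group H] [TopologicalSpace H] [IsTopologicalGroup H]
    [SigmaCompactSpace H] (π : G →* H) : IsCompact (closure (Set.range π)) := by
  obtain ⟨n, k, hnk⟩ := hG (fun n => π ⁻¹' compactCovering H n)
    (fun n => Set.preimage_mono (compactCovering_subset H n.le_succ))
    (by simp only [← Set.preimage_iUnion, iUnion_compactCovering, Set.preimage_univ])
  refine ((isCompact_compactCovering H n).pow k).closure_of_subset ?_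
  rintro _ ⟨g, rfl⟩
  have hg : π g ∈ (π '' (π ⁻¹' compactCovering H n)) ^ k := by
    rw [← Set.image_pow, hnk]
    exact Set.mem_image_of_mem π (Set.mem_univ g)
  exact Set.pow_subset_pow_left (Set.image_preimage_subset π _) hg

theorem Subgroup.exists_continuous_conj_invariant_of_isCompact {H : Type*} [Group H]
    [TopologicalSpace H] [IsTopologicalGroup H] [TopologicalSpace.MetrizableSpace H]
    (K : Subgroup H) (hK : IsCompact (K : Set H)) :
    ∃ f : H → ℝ, Continuous f ∧ (∀ x, f x = 0 ↔ x = 1) ∧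
      ∀ k ∈ K, ∀ x, f (k * x * k⁻¹) = f x := by
  let := TopologicalSpace.metrizableSpaceMetric H
  have : CompactSpace K := isCompact_iff_compactSpace.mp hK
  let Φ : C(H, C(K, ℝ)) := ContinuousMap.curry
    ⟨fun p : H × K => dist ((p.2 : H) * p.1 * (p.2 : H)⁻¹) 1, by fun_prop⟩
  have hΦ : ∀ x (u : K), Φ x u = dist ((u : H) * x * (u : H)⁻¹) 1 := fun _ _ => rfl
  have hle : ∀ k ∈ K, ∀ x, ‖Φ (k * x * k⁻¹)‖ ≤ ‖Φ x‖ := by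
    intro k hk x
    refine ((Φ _).norm_le (norm_nonneg _)).2 fun u => ?_
    have hu : Φ (k * x * k⁻¹) u = Φ x ⟨u * k, K.mul_mem u.2 hk⟩ := by
      simp only [hΦ, mul_inv_rev, mul_assoc]
    rw [hu]
    exact (Φ x).norm_coe_le_norm _
  refine ⟨fun x => ‖Φ x‖, continuous_norm.comp Φ.continuous,
    fun x => ⟨fun hx => ?_, ?_⟩, fun k hk x => (hle k hk x).antisymm ?_⟩
  · have h1 : ‖Φ x ⟨1, K.one_mem⟩‖ ≤ ‖Φ x‖ := (Φ x).norm_coe_le_norm _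
    rw [show ‖Φ x‖ = 0 from hx, hΦ] at h1
    simpa only [one_mul, inv_one, mul_one, Real.norm_eq_abs, abs_nonpos_iff, dist_eq_zero]
      using h1
  · rintro rfl
    rw [norm_eq_zero]
    ext u
    simp [hΦ]
  · have hx : k⁻¹ * (k * x * k⁻¹) * k⁻¹⁻¹ = x := by group
    simpa only [hx] using hle k⁻¹ (K.inv_mem hk) (k * x * k⁻¹)

theorem MonoidHom.apply_eq_of_comeagre_conj_class {G H Y : Type*} [Group G]
    [TopologicalSpace G] [ContinuousMul G] [BaireSpace G] [Group H] [TopologicalSpace H]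
    [ContinuousMul H] [TopologicalSpace.PseudoMetrizableSpace H]
    [TopologicalSpace.SeparableSpace H] [TopologicalSpace Y] [T2Space Y]
    (hconj : ∃ h : G, {x : G | IsConj h x} ∈ residual G) (π : G →* H) {f : H → Y}
    (hf : Continuous f) (hinv : ∀ g x, f (π g * x * (π g)⁻¹) = f x) (g : G) :
    f (π g) = f 1 := by
  obtain ⟨h₀, hC⟩ := hconj
  obtain ⟨t, hts, htc, htd⟩ :=
    (TopologicalSpace.IsSeparable.of_separableSpace (Set.range π)).exists_countable_dense_subset
  have := htc.to_subtype
  choose lift hlift using fun x : t => hts x.2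
  have htranslate : ∀ x : t, {y : G | IsConj h₀ (lift x * y)} ∈ residual G := fun x => by
    rw [← (Homeomorph.mulLeft (lift x)).residual_map_eq] at hC
    exact hC
  obtain ⟨c, hc⟩ := (dense_of_mem_residual (countable_iInter_mem.2 htranslate)).nonempty
  have hconst : ∀ y ∈ Set.range π, f (y * π c) = f (π h₀) := by
    refine fun y hy => closure_minimal (fun x hx => ?_)
      (isClosed_eq (hf.comp (continuous_mul_const (π c))) continuous_const) (htd hy)
    obtain ⟨u, hu⟩ := isConj_iff.mp (Set.mem_iInter.mp hc ⟨x, hx⟩)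
    have hxc : x * π c = π u * π h₀ * (π u)⁻¹ := by
      rw [← map_inv, ← map_mul, ← map_mul, hu, map_mul, hlift]
    show f (x * π c) = f (π h₀)
    rw [hxc, hinv]
  have h1 := hconst _ ⟨c⁻¹, rfl⟩
  have hg := hconst _ ⟨g * c⁻¹, rfl⟩
  rw [← map_mul, inv_mul_cancel, map_one] at h1
  rw [← map_mul, inv_mul_cancel_right] at hg
  rw [hg, h1]

open Pointwise in
/-- If `G` is a Polish group with the Bergman property and a comeagre conjugacy class, then
every abstract group homomorphism from `G` into a locally compact Polish group is trivial. -/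
theorem hom_to_locallyCompact_trivial {G H : Type*}
    [Group G] [TopologicalSpace G] [IsTopologicalGroup G] [PolishSpace G]
    [Group H] [TopologicalSpace H] [IsTopologicalGroup H] [PolishSpace H]
    [LocallyCompactSpace H]
    (hBergman : ∀ W : ℕ → Set G, (∀ n : ℕ, W n ⊆ W (n + 1)) → (⋃ n : ℕ, W n) = Set.univ →
      ∃ n k : ℕ, W n ^ k = Set.univ)
    (hconj : ∃ h : G, {x : G | IsConj h x} ∈ residual G)
    (π : G →* H) :
    ∀ g : G, π g = 1 := by
  have hK : IsCompact (π.range.topologicalClosure : Set H) := by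
    rw [Subgroup.topologicalClosure_coe, MonoidHom.coe_range]
    exact HasBergmanProperty.isCompact_closure_range hBergman π
  obtain ⟨f, hf, hf_zero, hf_inv⟩ :=
    π.range.topologicalClosure.exists_continuous_conj_invariant_of_isCompact hK
  have hπ_inv : ∀ g x, f (π g * x * (π g)⁻¹) = f x := fun g =>
    hf_inv _ (π.range.le_topologicalClosure ⟨g, rfl⟩)
  intro g
  rw [← hf_zero, π.apply_eq_of_comeagre_conj_class hconj hf hπ_inv g, hf_zero]
end

section
/- Let B and C be clopen subsets of the Cantor space 2^ℕ such that C ∩ B ≠ ∅ and C \ B ≠ ∅. Let G₁ = {f ∈ Homeo(2^ℕ) : f[B] = B} and G₂ = {f ∈ Homeo(2^ℕ) : f(x) = x for all x ∉ C}. Then every f ∈ Homeo(2^ℕ) can be written as f = g₁ g₂ g₃ g₄ g₅ with g₁, g₃, g₅ ∈ G₁ and g₂, g₄ ∈ G₂; that is, Homeo(2^ℕ) = G₁G₂G₁G₂G₁. -/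
/-- The group of self-homeomorphisms of a topological space, under composition. -/
instance homeomorphGroup {X : Type*} [TopologicalSpace X] : Group (X ≃ₜ X) where
  mul f g := g.trans f
  one := Homeomorph.refl X
  inv := Homeomorph.symm
  mul_assoc _ _ _ := rfl
  one_mul _ := rfl
  mul_one _ := rfl
  inv_mul_cancel f := Homeomorph.ext fun x => f.symm_apply_apply x

/-!
Every nonempty clopen subset of the Cantor space is homeomorphic to the whole space. Gluing such
homeomorphisms, a homeomorphism fixing the complement of a clopen set `K` can carry a clopen `D`
onto any clopen `E` with `D \ K = E \ K` for which `K ∩ D` and `K ∩ E` are of the same kind: both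
empty, both all of `K`, or both proper and nonempty. Likewise an element of `G₁` can carry `D` onto
`E` whenever they are of the same kind inside `B` and inside `Bᶜ`.

It suffices to find `w ∈ G₁G₂G₁G₂` with `w[B] = f[B]`, for then `w⁻¹f ∈ G₁`. Take a clopen
`U ⊆ C` splitting both `C ∩ B` and `C \ B`, and a clopen `E` of the same kinds as `f[B]` inside `B`
and `Bᶜ` that meets `C` without containing it. Then `G₂` moves `B` to `(B \ C) ∪ U`, `G₁` moves
this to `(E \ C) ∪ U`, `G₂` moves that to `E`, and `G₁` moves `E` to `f[B]`.
-/

open Set Set.Notation PiNat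

theorem Homeomorph.image_mul {X : Type*} [TopologicalSpace X] (f g : X ≃ₜ X) (s : Set X) :
    (f * g) '' s = f '' (g '' s) :=
  image_comp f g s

namespace Homeomorph

variable {Y : Type*} [TopologicalSpace Y]

open Classical in
noncomputable def sumCompl {s : Set Y} (hs : IsClopen s) : s ⊕ ↥sᶜ ≃ₜ Y :=
  (Equiv.Set.sumCompl s).toHomeomorphOfContinuousOpen
    (continuous_subtype_val.sumElim continuous_subtype_val)
    (hs.isOpen.isOpenMap_subtype_val.sumElim hs.compl.isOpen.isOpenMap_subtype_val)

noncomputable def subtypeCongr {s t : Set Y} (hs : IsClopen s) (ht : IsClopen t) (e₁ : s ≃ₜ t)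
    (e₂ : ↥sᶜ ≃ₜ ↥tᶜ) : Y ≃ₜ Y :=
  (sumCompl hs).symm.trans ((e₁.sumCongr e₂).trans (sumCompl ht))

variable {s t : Set Y} {hs : IsClopen s} {ht : IsClopen t} {e₁ : s ≃ₜ t} {e₂ : ↥sᶜ ≃ₜ ↥tᶜ}

theorem subtypeCongr_apply_of_mem {x : Y} (hx : x ∈ s) :
    subtypeCongr hs ht e₁ e₂ x = e₁ ⟨x, hx⟩ := by
  classical
  change Equiv.Set.sumCompl t (Sum.map e₁ e₂ ((Equiv.Set.sumCompl s).symm x)) = _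
  rw [Equiv.Set.sumCompl_symm_apply_of_mem hx]
  rfl

theorem subtypeCongr_apply_of_notMem {x : Y} (hx : x ∉ s) :
    subtypeCongr hs ht e₁ e₂ x = e₂ ⟨x, hx⟩ := by
  classical
  change Equiv.Set.sumCompl t (Sum.map e₁ e₂ ((Equiv.Set.sumCompl s).symm x)) = _
  rw [Equiv.Set.sumCompl_symm_apply_of_notMem hx]
  rfl

theorem image_subtypeCongr (D : Set Y) :
    subtypeCongr hs ht e₁ e₂ '' D = (↑) '' (e₁ '' (s ↓∩ D)) ∪ (↑) '' (e₂ '' (sᶜ ↓∩ D)) := by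
  ext y
  constructor
  · rintro ⟨x, hxD, rfl⟩
    by_cases hx : x ∈ s
    · exact .inl ⟨_, ⟨⟨x, hx⟩, hxD, rfl⟩, (subtypeCongr_apply_of_mem hx).symm⟩
    · exact .inr ⟨_, ⟨⟨x, hx⟩, hxD, rfl⟩, (subtypeCongr_apply_of_notMem hx).symm⟩
  · rintro (⟨_, ⟨x, hxD, rfl⟩, rfl⟩ | ⟨_, ⟨x, hxD, rfl⟩, rfl⟩)
    · exact ⟨x, hxD, subtypeCongr_apply_of_mem x.2⟩
    · exact ⟨x, hxD, subtypeCongr_apply_of_notMem x.2⟩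

theorem image_subtypeCongr_self : subtypeCongr hs ht e₁ e₂ '' s = t := by
  simp [image_subtypeCongr]

end Homeomorph

theorem exists_homeomorph_image_eq_of_isClopen {Y Z : Type*} [TopologicalSpace Y]
    [TopologicalSpace Z] (hY : ∀ s : Set Y, IsClopen s → s.Nonempty → Nonempty (s ≃ₜ Z)) {s t : Set Y}
    (hs : IsClopen s) (ht : IsClopen t) (h₀ : s.Nonempty ↔ t.Nonempty)
    (h₁ : sᶜ.Nonempty ↔ tᶜ.Nonempty) : ∃ φ : Y ≃ₜ Y, φ '' s = t := by
  rcases s.eq_empty_or_nonempty with rfl | hs₀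
  · exact ⟨.refl Y, by simpa [eq_comm, not_nonempty_iff_eq_empty] using h₀⟩
  rcases sᶜ.eq_empty_or_nonempty with hs₁ | hs₁
  · have ht₁ : tᶜ = ∅ := not_nonempty_iff_eq_empty.1 fun h => by simpa [hs₁] using h₁.2 h
    exact ⟨.refl Y, by rw [compl_empty_iff.1 hs₁, compl_empty_iff.1 ht₁]; simp⟩
  obtain ⟨e₁⟩ := hY s hs hs₀
  obtain ⟨f₁⟩ := hY t ht (h₀.1 hs₀)
  obtain ⟨e₂⟩ := hY _ hs.compl hs₁
  obtain ⟨f₂⟩ := hY _ ht.compl (h₁.1 hs₁)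
  exact ⟨.subtypeCongr hs ht (e₁.trans f₁.symm) (e₂.trans f₂.symm),
    Homeomorph.image_subtypeCongr_self⟩

section SameKind

variable {Y : Type*}

def SameKindIn (K D E : Set Y) : Prop :=
  ((K ∩ D).Nonempty ↔ (K ∩ E).Nonempty) ∧ ((K \ D).Nonempty ↔ (K \ E).Nonempty)

theorem sameKindIn_of_mem {K D E : Set Y} {a a' b b' : Y} (ha : a ∈ K ∩ D) (ha' : a' ∈ K ∩ E)
    (hb : b ∈ K \ D) (hb' : b' ∈ K \ E) : SameKindIn K D E :=
  ⟨iff_of_true ⟨a, ha⟩ ⟨a', ha'⟩, iff_of_true ⟨b, hb⟩ ⟨b', hb'⟩⟩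

theorem SameKindIn.union_left {K D E F : Set Y} (h : SameKindIn K D E) (hF : Disjoint K F) :
    SameKindIn K (D ∪ F) E := by
  rwa [SameKindIn, inter_union_distrib_left, hF.inter_eq, union_empty, ← sdiff_sdiff,
    (hF.mono_left sdiff_subset).sdiff_eq_left]

theorem exists_sameKindIn_subset [TopologicalSpace Y] {K U D : Set Y} (hK : IsClopen K)
    (hU : IsClopen U) (hKU : (K ∩ U).Nonempty) (hKU' : (K \ U).Nonempty) :
    ∃ S, IsClopen S ∧ S ⊆ K ∧ SameKindIn K S D ∧
      ((K ∩ D).Nonempty → K ∩ U ⊆ S) ∧ ((K \ D).Nonempty → S ⊆ U) := by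
  by_cases h₀ : (K ∩ D).Nonempty
  · by_cases h₁ : (K \ D).Nonempty
    · refine ⟨K ∩ U, hK.inter hU, inter_subset_left, ?_, fun _ => subset_rfl,
        fun _ => inter_subset_right⟩
      rw [SameKindIn, ← inter_assoc, inter_self, sdiff_self_inter]
      exact ⟨iff_of_true hKU h₀, iff_of_true hKU' h₁⟩
    · refine ⟨K, hK, subset_rfl, ?_, fun _ => inter_subset_left, fun h => absurd h h₁⟩
      rw [SameKindIn, inter_self, sdiff_self]
      exact ⟨iff_of_true (hKU.mono inter_subset_left) h₀, iff_of_false (by simp) h₁⟩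
  · refine ⟨∅, isClopen_empty, empty_subset _, ?_, fun h => absurd h h₀, fun _ => empty_subset _⟩
    rw [SameKindIn, inter_empty, sdiff_empty]
    obtain ⟨x, hx, -⟩ := hKU
    exact ⟨iff_of_false (by simp) h₀, iff_of_true ⟨x, hx⟩ ⟨x, hx, fun hxD => h₀ ⟨x, hx, hxD⟩⟩⟩

theorem exists_sameKindIn_inter_nonempty_diff_nonempty [TopologicalSpace Y] {B C U D : Set Y}
    (hB : IsClopen B) (hU : IsClopen U) (hD₀ : D.Nonempty) (hD₁ : Dᶜ.Nonempty)
    {a₁ b₁ a₃ b₃ : Y} (ha₁ : a₁ ∈ C ∩ B ∩ U) (hb₁ : b₁ ∈ (C ∩ B) \ U) (ha₃ : a₃ ∈ (C \ B) ∩ U)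
    (hb₃ : b₃ ∈ (C \ B) \ U) :
    ∃ E, IsClopen E ∧ SameKindIn B E D ∧ SameKindIn Bᶜ E D ∧ (C ∩ E).Nonempty ∧
      (C \ E).Nonempty := by
  obtain ⟨S₁, hS₁, hS₁B, hS₁D, hUS₁, hS₁U⟩ :=
    exists_sameKindIn_subset (D := D) hB hU ⟨a₁, ha₁.1.2, ha₁.2⟩ ⟨b₁, hb₁.1.2, hb₁.2⟩
  obtain ⟨S₃, hS₃, hS₃B, hS₃D, hUS₃, hS₃U⟩ :=
    exists_sameKindIn_subset (D := D) hB.compl hU ⟨a₃, ha₃.1.2, ha₃.2⟩ ⟨b₃, hb₃.1.2, hb₃.2⟩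
  refine ⟨S₁ ∪ S₃, hS₁.union hS₃, hS₁D.union_left (disjoint_compl_right.mono_right hS₃B),
    union_comm S₁ S₃ ▸ hS₃D.union_left (disjoint_compl_left.mono_right hS₁B), ?_, ?_⟩
  · obtain ⟨x, hx⟩ := hD₀
    by_cases hxB : x ∈ B
    · exact ⟨a₁, ha₁.1.1, .inl (hUS₁ ⟨x, hxB, hx⟩ ⟨ha₁.1.2, ha₁.2⟩)⟩
    · exact ⟨a₃, ha₃.1.1, .inr (hUS₃ ⟨x, hxB, hx⟩ ⟨ha₃.1.2, ha₃.2⟩)⟩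
  · obtain ⟨x, hx⟩ := hD₁
    by_cases hxB : x ∈ B
    · refine ⟨b₁, hb₁.1.1, ?_⟩
      rintro (h | h)
      exacts [hb₁.2 (hS₁U ⟨x, hxB, hx⟩ h), hS₃B h hb₁.1.2]
    · refine ⟨b₃, hb₃.1.1, ?_⟩
      rintro (h | h)
      exacts [hb₃.1.2 (hS₁B h), hb₃.2 (hS₃U ⟨x, hxB, hx⟩ h)]

end SameKind

attribute [local instance] PiNat.metricSpace in
theorem IsClopen.exists_mem_iff_of_mem_cylinder {K : Set (ℕ → Bool)} (hK : IsClopen K) :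
    ∃ n, ∀ x, ∀ y ∈ cylinder x n, y ∈ K ↔ x ∈ K := by
  obtain ⟨δ, hδ, hcover⟩ :=
    lebesgue_number_lemma_of_metric (c := fun b : Bool => if b then K else Kᶜ) isCompact_univ
      (fun b => by cases b <;> simp [hK.isOpen, hK.isClosed.isOpen_compl])
      (fun x _ => by by_cases hx : x ∈ K <;> simp [hx])
  obtain ⟨n, hn⟩ := exists_pow_lt_of_lt_one hδ (by norm_num : (1 / 2 : ℝ) < 1)
  refine ⟨n, fun x y hy => ?_⟩
  have hyx : y ∈ Metric.ball x δ := (mem_cylinder_iff_dist_le.1 hy).trans_lt hn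
  obtain ⟨b, hb⟩ := hcover x trivial
  have hx := hb (Metric.mem_ball_self hδ)
  have hy := hb hyx
  cases b
  · exact iff_of_false (by simpa using hy) (by simpa using hx)
  · exact iff_of_true (by simpa using hy) (by simpa using hx)

def finPrefixProdHomeomorph (α : Type*) [TopologicalSpace α] (n : ℕ) :
    (Fin n → α) × (ℕ → α) ≃ₜ (ℕ → α) where
  toFun p i := if h : i < n then p.1 ⟨i, h⟩ else p.2 (i - n)
  invFun x := (fun i => x i, fun j => x (j + n))
  left_inv p := by ext <;> simp
  right_inv x := by
    ext i
    by_cases h : i < n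
    · simp [h]
    · simp [h, Nat.sub_add_cancel (not_lt.1 h)]
  continuous_toFun := continuous_pi fun i => by
    by_cases h : i < n
    · simp only [h, dite_true]; fun_prop
    · simp only [h, dite_false]; fun_prop
  continuous_invFun := by fun_prop

def natBoolSumSelfHomeomorph : (ℕ → Bool) ⊕ (ℕ → Bool) ≃ₜ (ℕ → Bool) :=
  (((Homeomorph.uniqueProd PUnit _).symm.sumCongr (Homeomorph.uniqueProd PUnit _).symm).trans
    Homeomorph.sumProdDistrib.symm).trans
    (((Homeomorph.ofDiscrete (Equiv.boolEquivPUnitSumPUnit.{0, 0}.symm.trans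
      (Equiv.funUnique (Fin 1) Bool).symm)).prodCongr (.refl _)).trans
      (finPrefixProdHomeomorph Bool 1))

theorem nonempty_fin_succ_prod_nat_bool_homeomorph :
    ∀ m : ℕ, Nonempty ((Fin (m + 1) × (ℕ → Bool)) ≃ₜ (ℕ → Bool))
  | 0 => ⟨Homeomorph.uniqueProd (Fin 1) _⟩
  | m + 1 => by
    obtain ⟨e⟩ := nonempty_fin_succ_prod_nat_bool_homeomorph m
    exact ⟨(((Homeomorph.ofDiscrete finSumFinEquiv.symm).prodCongr (.refl _)).trans
      Homeomorph.sumProdDistrib).trans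
      ((e.sumCongr (Homeomorph.uniqueProd _ _)).trans natBoolSumSelfHomeomorph)⟩

theorem IsClopen.nonempty_homeomorph_nat_bool {K : Set (ℕ → Bool)} (hK : IsClopen K)
    (hne : K.Nonempty) : Nonempty (K ≃ₜ (ℕ → Bool)) := by
  obtain ⟨n, hn⟩ := hK.exists_mem_iff_of_mem_cylinder
  set Φ := finPrefixProdHomeomorph Bool n
  set S : Set (Fin n → Bool) := {s | Φ (s, fun _ => false) ∈ K}
  have hΦ : ∀ p, p ∈ S ×ˢ (univ : Set (ℕ → Bool)) ↔ Φ p ∈ K := fun p => by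
    refine (show _ ↔ Φ (p.1, fun _ => false) ∈ K by simp [S]).trans
      (hn _ _ (mem_cylinder_iff.2 fun i hi => ?_)).symm
    exact (dif_pos hi).trans (dif_pos hi : Φ (p.1, fun _ => false) i = _).symm
  have : Nonempty S := by
    obtain ⟨x, hx⟩ := hne
    exact ⟨⟨(Φ.symm x).1, ((hΦ _).2 (by simpa using hx)).1⟩⟩
  obtain ⟨m, ⟨eS⟩⟩ := Finite.exists_equiv_fin S
  obtain ⟨k, rfl⟩ : ∃ k, m = k + 1 := Nat.exists_eq_succ_of_ne_zero (by
    rintro rfl; exact (eS (Classical.arbitrary S)).elim0)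
  obtain ⟨eF⟩ := nonempty_fin_succ_prod_nat_bool_homeomorph k
  exact ⟨(Φ.subtype hΦ).symm.trans ((Homeomorph.Set.prod S univ).trans
    (((Homeomorph.ofDiscrete eS).prodCongr (Homeomorph.Set.univ _)).trans eF))⟩

theorem IsClopen.exists_isClopen_subset_nonempty_diff {P : Set (ℕ → Bool)} (hP : IsClopen P)
    (hne : P.Nonempty) : ∃ H, IsClopen H ∧ H ⊆ P ∧ H.Nonempty ∧ (P \ H).Nonempty := by
  obtain ⟨n, hn⟩ := hP.exists_mem_iff_of_mem_cylinder
  obtain ⟨x, hx⟩ := hne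
  refine ⟨P ∩ {y | y n = x n}, hP.inter ((isClopen_discrete {x n}).preimage (continuous_apply n)),
    inter_subset_left, ⟨x, hx, rfl⟩, ⟨Function.update x n (!x n), ?_, by simp⟩⟩
  exact (hn x _ (mem_cylinder_iff.2 fun i hi => Function.update_of_ne hi.ne _ _)).2 hx

theorem IsClopen.nonempty_homeomorph_nat_bool_of_subtype {K : Set (ℕ → Bool)} (hK : IsClopen K)
    {s : Set K} (hs : IsClopen s) (hne : s.Nonempty) : Nonempty (s ≃ₜ (ℕ → Bool)) := by
  have hs' : IsClopen (((↑) : K → ℕ → Bool) '' s) :=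
    ⟨hK.isClosed.isClosedMap_subtype_val _ hs.isClosed,
      hK.isOpen.isOpenMap_subtype_val _ hs.isOpen⟩
  obtain ⟨e⟩ := hs'.nonempty_homeomorph_nat_bool (hne.image _)
  exact ⟨(Topology.IsEmbedding.subtypeVal.homeomorphImage s).trans e⟩

section Cantor

variable {K D E : Set (ℕ → Bool)}

theorem exists_homeomorph_subtype_image_eq (hK : IsClopen K) (hD : IsClopen D) (hE : IsClopen E)
    (h : SameKindIn K D E) : ∃ φ : K ≃ₜ K, ((↑) : K → ℕ → Bool) '' (φ '' (K ↓∩ D)) = K ∩ E := by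
  obtain ⟨φ, hφ⟩ := exists_homeomorph_image_eq_of_isClopen
    (fun _ hs hne => hK.nonempty_homeomorph_nat_bool_of_subtype hs hne)
    (hD.preimage continuous_subtype_val) (hE.preimage continuous_subtype_val)
    (by simpa only [Subtype.preimage_coe_nonempty] using h.1)
    (by simp only [← preimage_compl, Subtype.preimage_coe_nonempty]; exact h.2)
  exact ⟨φ, by rw [hφ, Subtype.image_preimage_coe]⟩

theorem exists_homeomorph_fixing_compl_image_eq (hK : IsClopen K) (hD : IsClopen D)
    (hE : IsClopen E) (hDE : D \ K = E \ K) (h : SameKindIn K D E) :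
    ∃ g : (ℕ → Bool) ≃ₜ (ℕ → Bool), (∀ x ∉ K, g x = x) ∧ g '' D = E := by
  obtain ⟨φ, hφ⟩ := exists_homeomorph_subtype_image_eq hK hD hE h
  refine ⟨.subtypeCongr hK hK φ (.refl _), fun _ hx => Homeomorph.subtypeCongr_apply_of_notMem hx,
    ?_⟩
  rw [Homeomorph.image_subtypeCongr, hφ, Homeomorph.refl_apply, image_id,
    Subtype.image_preimage_coe, inter_comm, ← sdiff_eq_compl_inter, hDE, inter_union_sdiff]

theorem exists_homeomorph_preserving_image_eq (hK : IsClopen K) (hD : IsClopen D) (hE : IsClopen E)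
    (hin : SameKindIn K D E) (hout : SameKindIn Kᶜ D E) :
    ∃ g : (ℕ → Bool) ≃ₜ (ℕ → Bool), g '' K = K ∧ g '' D = E := by
  obtain ⟨φ, hφ⟩ := exists_homeomorph_subtype_image_eq hK hD hE hin
  obtain ⟨ψ, hψ⟩ := exists_homeomorph_subtype_image_eq hK.compl hD hE hout
  refine ⟨.subtypeCongr hK hK φ ψ, Homeomorph.image_subtypeCongr_self, ?_⟩
  rw [Homeomorph.image_subtypeCongr, hφ, hψ, ← union_inter_distrib_right, union_compl_self,
    univ_inter]

end Cantor

theorem exists_isClopen_subset_splitting {B C : Set (ℕ → Bool)} (hB : IsClopen B)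
    (hC : IsClopen C) (hCB : (C ∩ B).Nonempty) (hCnotB : (C \ B).Nonempty) :
    ∃ U, IsClopen U ∧ U ⊆ C ∧ ∃ a₁ b₁ a₃ b₃, a₁ ∈ C ∩ B ∩ U ∧ b₁ ∈ (C ∩ B) \ U ∧
      a₃ ∈ (C \ B) ∩ U ∧ b₃ ∈ (C \ B) \ U := by
  obtain ⟨H₁, hH₁, hH₁CB, ⟨a₁, ha₁⟩, ⟨b₁, hb₁CB, hb₁⟩⟩ :=
    (hC.inter hB).exists_isClopen_subset_nonempty_diff hCB
  obtain ⟨H₃, hH₃, hH₃CB, ⟨a₃, ha₃⟩, ⟨b₃, hb₃CB, hb₃⟩⟩ :=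
    (hC.diff hB).exists_isClopen_subset_nonempty_diff hCnotB
  refine ⟨H₁ ∪ H₃, hH₁.union hH₃,
    union_subset (hH₁CB.trans inter_subset_left) (hH₃CB.trans sdiff_subset), a₁, b₁, a₃, b₃,
    ⟨hH₁CB ha₁, .inl ha₁⟩, ⟨hb₁CB, ?_⟩, ⟨hH₃CB ha₃, .inr ha₃⟩, ⟨hb₃CB, ?_⟩⟩
  · rintro (h | h)
    exacts [hb₁ h, (hH₃CB h).2 hb₁CB.2]
  · rintro (h | h)
    exacts [hb₃CB.2 (hH₁CB h).2, hb₃ h]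

theorem exists_G1G2G1G2_image_eq {B C D : Set (ℕ → Bool)} (hB : IsClopen B) (hC : IsClopen C)
    (hCB : (C ∩ B).Nonempty) (hCnotB : (C \ B).Nonempty) (hD : IsClopen D) (hD₀ : D.Nonempty)
    (hD₁ : Dᶜ.Nonempty) :
    ∃ g₁ g₂ g₃ g₄ : (ℕ → Bool) ≃ₜ (ℕ → Bool), g₁ '' B = B ∧ g₃ '' B = B ∧
      (∀ x ∉ C, g₂ x = x) ∧ (∀ x ∉ C, g₄ x = x) ∧ (g₁ * g₂ * g₃ * g₄) '' B = D := by
  obtain ⟨U, hU, hUC, a₁, b₁, a₃, b₃, ha₁, hb₁, ha₃, hb₃⟩ :=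
    exists_isClopen_subset_splitting hB hC hCB hCnotB
  obtain ⟨E, hE, hEB, hEBc, hCE, hCE'⟩ :=
    exists_sameKindIn_inter_nonempty_diff_nonempty hB hU hD₀ hD₁ ha₁ hb₁ ha₃ hb₃
  have hU_diff : ∀ A : Set (ℕ → Bool), (A \ C ∪ U) \ C = A \ C := fun A => by
    rw [union_sdiff_distrib, sdiff_idem, Set.sdiff_eq_empty.2 hUC, union_empty]
  simp only [mem_inter_iff, mem_sdiff] at ha₁ hb₁ ha₃ hb₃
  have h₄ : SameKindIn C B (B \ C ∪ U) := by
    refine sameKindIn_of_mem (a := a₁) (a' := a₁) (b := a₃) (b' := b₁) ?_ ?_ ?_ ?_ <;> simp [*]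
  have h₃ : SameKindIn B (B \ C ∪ U) (E \ C ∪ U) := by
    refine sameKindIn_of_mem (a := a₁) (a' := a₁) (b := b₁) (b' := b₁) ?_ ?_ ?_ ?_ <;> simp [*]
  have h₃' : SameKindIn Bᶜ (B \ C ∪ U) (E \ C ∪ U) := by
    refine sameKindIn_of_mem (a := a₃) (a' := a₃) (b := b₃) (b' := b₃) ?_ ?_ ?_ ?_ <;> simp [*]
  have h₂ : SameKindIn C (E \ C ∪ U) E :=
    ⟨iff_of_true ⟨a₁, by simp [*]⟩ hCE, iff_of_true ⟨b₁, by simp [*]⟩ hCE'⟩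
  have hE₁ : IsClopen (B \ C ∪ U) := (hB.diff hC).union hU
  have hE₂ : IsClopen (E \ C ∪ U) := (hE.diff hC).union hU
  obtain ⟨g₄, hg₄C, hg₄⟩ := exists_homeomorph_fixing_compl_image_eq hC hB hE₁ (hU_diff B).symm h₄
  obtain ⟨g₃, hg₃B, hg₃⟩ := exists_homeomorph_preserving_image_eq hB hE₁ hE₂ h₃ h₃'
  obtain ⟨g₂, hg₂C, hg₂⟩ := exists_homeomorph_fixing_compl_image_eq hC hE₂ hE (hU_diff E) h₂
  obtain ⟨g₁, hg₁B, hg₁⟩ := exists_homeomorph_preserving_image_eq hB hE hD hEB hEBc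
  refine ⟨g₁, g₂, g₃, g₄, hg₁B, hg₃B, hg₂C, hg₄C, ?_⟩
  simp only [Homeomorph.image_mul, hg₄, hg₃, hg₂, hg₁]

/-- If `B, C` are clopen subsets of the Cantor space with `C ∩ B` and `C \ B` nonempty,
`G₁` the set of homeomorphisms preserving `B` and `G₂` the set of homeomorphisms supported
in `C`, then `Homeo(2^ℕ) = G₁G₂G₁G₂G₁`. -/
theorem homeoCantor_eq_G1G2G1G2G1 (B C : Set (ℕ → Bool))
    (hB : IsClopen B) (hC : IsClopen C)
    (hCB : (C ∩ B).Nonempty) (hCnotB : (C \ B).Nonempty)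
    (f : (ℕ → Bool) ≃ₜ (ℕ → Bool)) :
    ∃ g₁ g₂ g₃ g₄ g₅ : (ℕ → Bool) ≃ₜ (ℕ → Bool),
      g₁ '' B = B ∧ g₃ '' B = B ∧ g₅ '' B = B ∧
      (∀ x ∉ C, g₂ x = x) ∧ (∀ x ∉ C, g₄ x = x) ∧
      f = g₁ * g₂ * g₃ * g₄ * g₅ := by
  have hfB : IsClopen (f '' B) := ⟨f.isClosedMap _ hB.isClosed, f.isOpenMap _ hB.isOpen⟩
  have hfB₀ : (f '' B).Nonempty := (hCB.mono inter_subset_right).image f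
  have hfB₁ : (f '' B)ᶜ.Nonempty := by
    rw [← f.image_compl]
    exact (hCnotB.mono fun _ hx => hx.2).image f
  obtain ⟨g₁, g₂, g₃, g₄, hg₁, hg₃, hg₂, hg₄, hw⟩ :=
    exists_G1G2G1G2_image_eq hB hC hCB hCnotB hfB hfB₀ hfB₁
  refine ⟨g₁, g₂, g₃, g₄, (g₁ * g₂ * g₃ * g₄)⁻¹ * f, hg₁, hg₃, ?_, hg₂, hg₄, by group⟩
  rw [Homeomorph.image_mul, ← hw, ← Homeomorph.image_mul, inv_mul_cancel]
  exact image_id B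
end

section
/- Let 𝒟 be the family of all subsets X ⊆ ℚ of the form X = ⋃_{n ∈ ℤ} (x_{2n}, x_{2n+1}) ∩ ℚ, where (x_n)_{n ∈ ℤ} is a strictly increasing two-sided sequence of irrational real numbers with x_n → +∞ as n → +∞ and x_n → −∞ as n → −∞. For X ∈ 𝒟 let A(X) = {g ∈ Aut(ℚ,<) : g(q) = q for all q ∈ ℚ \ X}. Then every g ∈ Aut(ℚ,<) can be written as g = a·b with a ∈ A(X) and b ∈ A(Y) for some X, Y ∈ 𝒟; that is, Aut(ℚ,<) = ⋃_{X,Y ∈ 𝒟} A(X)·A(Y). -/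
/-!
Choose irrationals `⋯ < d₋₁ < d₀ < d₁ < ⋯` tending to `±∞` and so sparse that the extension
`ĝ x = sup {g q | q < x}` of `g` to `ℝ` satisfies `d_{k-1} < ĝ d_k < d_{k+1}`. Put `c_k = ĝ d_k`
for `k ≡ 1, 2 (mod 4)` and `c_k = d_k` otherwise; then `c` is again increasing, and an order
automorphism `F` of `ℚ` is obtained by mapping each cell `(d_k, d_{k+1})` onto `(c_k, c_{k+1})`:
by `g` when `k ≡ 1`, by the identity when `k ≡ 3`, and by any order isomorphism (Cantor's
back-and-forth theorem) when `k ≡ 0, 2`. So `F` fixes `ℚ` outside `X = ⋃ (d_{4n}, d_{4n+3})`,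
`F⁻¹ g` fixes the cells `k ≡ 1`, i.e. `ℚ` outside `Y = ⋃ (d_{4n+2}, d_{4n+5})`, and
`g = F · F⁻¹ g`.
-/

/-- `X ⊆ ℚ` belongs to the family `𝒟` if it is the trace on `ℚ` of a two-sided union
`⋃_{n ∈ ℤ} (x_{2n}, x_{2n+1})` of open intervals with irrational endpoints, where
`(x_n)_{n ∈ ℤ}` is strictly increasing and tends to `±∞` as `n → ±∞`. -/
def MemD (X : Set ℚ) : Prop :=
  ∃ x : ℤ → ℝ, (∀ n : ℤ, Irrational (x n)) ∧ StrictMono x ∧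
    Filter.Tendsto x Filter.atTop Filter.atTop ∧
    Filter.Tendsto x Filter.atBot Filter.atBot ∧
    X = ⋃ n : ℤ, {q : ℚ | x (2 * n) < (q : ℝ) ∧ (q : ℝ) < x (2 * n + 1)}

/-- For `X ⊆ ℚ`, `A(X)` is the set of order-automorphisms of `ℚ` supported in `X`. -/
def A (X : Set ℚ) : Set (ℚ ≃o ℚ) := {g : ℚ ≃o ℚ | ∀ q : ℚ, q ∉ X → g q = q}

open Filter Set

def ratIoo (a b : ℝ) : Set ℚ := (↑) ⁻¹' Ioo a b

namespace ratIoo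

variable {a b : ℝ}

instance : OrdConnected (ratIoo a b) :=
  ⟨fun _ hx _ hy _ hz => ⟨hx.1.trans_le (Rat.cast_le.2 hz.1), (Rat.cast_le.2 hz.2).trans_lt hy.2⟩⟩

instance : NoMaxOrder (ratIoo a b) :=
  ⟨fun x => let ⟨q, hxq, hqb⟩ := exists_rat_btwn x.2.2
    ⟨⟨q, x.2.1.trans hxq, hqb⟩, Rat.cast_lt.1 hxq⟩⟩

instance : NoMinOrder (ratIoo a b) :=
  ⟨fun x => let ⟨q, haq, hqx⟩ := exists_rat_btwn x.2.1
    ⟨⟨q, haq, hqx.trans x.2.2⟩, Rat.cast_lt.1 hqx⟩⟩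

theorem nonempty (h : a < b) : (ratIoo a b).Nonempty :=
  let ⟨q, hq⟩ := exists_rat_btwn h
  ⟨q, hq⟩

theorem nonempty_orderIso {c d : ℝ} (hab : a < b) (hcd : c < d) :
    Nonempty (ratIoo a b ≃o ratIoo c d) :=
  have := (nonempty hab).to_subtype
  have := (nonempty hcd).to_subtype
  Order.iso_of_countable_dense _ _

end ratIoo

noncomputable def OrderIso.sigmaLexCongrRight {ι : Type*} [LinearOrder ι] {α β : ι → Type*}
    [∀ i, LinearOrder (α i)] [∀ i, LinearOrder (β i)] (e : ∀ i, α i ≃o β i) :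
    (Σₗ i, α i) ≃o Σₗ i, β i :=
  StrictMono.orderIsoOfSurjective (fun p => toLex ⟨(ofLex p).1, e _ (ofLex p).2⟩)
    (by
      rintro ⟨i, a⟩ ⟨j, b⟩ (⟨_, _, hij⟩ | ⟨_, _, hab⟩)
      · exact Sigma.Lex.left _ _ hij
      · exact Sigma.Lex.right _ _ ((e i).strictMono hab))
    fun p => ⟨toLex ⟨(ofLex p).1, (e _).symm (ofLex p).2⟩,
      congrArg toLex (Sigma.ext rfl (heq_of_eq ((e _).apply_symm_apply _)))⟩

structure IsIrrationalPartition (c : ℤ → ℝ) : Prop where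
  irrational : ∀ k, Irrational (c k)
  strictMono : StrictMono c
  tendsto_atTop : Tendsto c atTop atTop
  tendsto_atBot : Tendsto c atBot atBot

namespace IsIrrationalPartition

variable {c : ℤ → ℝ}

theorem of_add_one_le (hirr : ∀ k, Irrational (c k)) (hstep : ∀ k, c k + 1 ≤ c (k + 1)) :
    IsIrrationalPartition c := by
  have hmono : Monotone fun k : ℤ => c k - k :=
    monotone_int_of_le_succ fun k => by push_cast; linarith [hstep k]
  refine ⟨hirr, strictMono_int_of_lt_succ fun k => by linarith [hstep k], ?_, ?_⟩
  · simpa using tendsto_atTop_add_left_of_le' (f := fun k : ℤ => c k - k) atTop (c 0)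
      ((eventually_ge_atTop 0).mono fun k hk => by simpa using hmono hk) tendsto_intCast_atTop_atTop
  · simpa using tendsto_atBot_add_left_of_ge' (f := fun k : ℤ => c k - k) atBot (c 0)
      ((eventually_le_atBot 0).mono fun k hk => by simpa using hmono hk)
      (tendsto_intCast_atBot_iff.2 tendsto_id)

variable (hc : IsIrrationalPartition c)
include hc

theorem exists_mem_ratIoo (q : ℚ) : ∃ k, q ∈ ratIoo (c k) (c (k + 1)) := by
  obtain ⟨B, hB⟩ := eventually_atTop.1 (hc.tendsto_atTop.eventually_ge_atTop (q : ℝ))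
  obtain ⟨k, hk, hmax⟩ := Int.exists_greatest_of_bdd (P := fun k => c k < q)
    ⟨B, fun k hk => not_lt.1 fun hBk => (hB k hBk.le).not_gt hk⟩
    (hc.tendsto_atBot.eventually_lt_atBot (q : ℝ)).exists
  refine ⟨k, hk, lt_of_le_of_ne (not_lt.1 fun h => ?_) ((hc.irrational (k + 1)).ne_rat q).symm⟩
  exact (hmax _ h).not_gt (lt_add_one k)

noncomputable def sigmaOrderIso : (Σₗ k, ratIoo (c k) (c (k + 1))) ≃o ℚ :=
  StrictMono.orderIsoOfSurjective (fun p => (ofLex p).2)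
    (by
      rintro ⟨i, a⟩ ⟨j, b⟩ (⟨_, _, hij⟩ | ⟨_, _, hab⟩)
      · exact Rat.cast_lt.1 <| a.2.2.trans_le <|
          (hc.strictMono.monotone (Int.add_one_le_of_lt hij)).trans b.2.1.le
      · exact hab)
    fun q => let ⟨k, hk⟩ := hc.exists_mem_ratIoo q; ⟨toLex ⟨k, q, hk⟩, rfl⟩

theorem sigmaOrderIso_symm_apply {k : ℤ} {q : ℚ} (hq : q ∈ ratIoo (c k) (c (k + 1))) :
    hc.sigmaOrderIso.symm q = toLex ⟨k, q, hq⟩ :=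
  hc.sigmaOrderIso.symm_apply_eq.2 rfl

theorem exists_orderIso_apply_eq {c' : ℤ → ℝ} (hc' : IsIrrationalPartition c')
    (e : ∀ k, ratIoo (c k) (c (k + 1)) ≃o ratIoo (c' k) (c' (k + 1))) :
    ∃ F : ℚ ≃o ℚ, ∀ k q (hq : q ∈ ratIoo (c k) (c (k + 1))), F q = e k ⟨q, hq⟩ :=
  ⟨hc.sigmaOrderIso.symm.trans ((OrderIso.sigmaLexCongrRight e).trans hc'.sigmaOrderIso),
    fun k q hq => by rw [OrderIso.trans_apply, hc.sigmaOrderIso_symm_apply hq]; rfl⟩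

end IsIrrationalPartition

def blockUnion (c : ℤ → ℝ) (m : ℤ) : Set ℚ :=
  ⋃ n : ℤ, ratIoo (c (4 * n + m)) (c (4 * n + m + 3))

theorem IsIrrationalPartition.memD_blockUnion {c : ℤ → ℝ} (hc : IsIrrationalPartition c)
    (m : ℤ) : MemD (blockUnion c m) := by
  set e : ℤ → ℤ := fun j => 2 * j + j % 2 + m
  have he : StrictMono e := strictMono_int_of_lt_succ fun j => by simp only [e]; omega
  refine ⟨c ∘ e, fun j => hc.irrational _, hc.strictMono.comp he,
    hc.tendsto_atTop.comp <| he.monotone.tendsto_atTop_atTop fun b =>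
      ⟨max (b - m) (m - b), by simp only [e]; omega⟩,
    hc.tendsto_atBot.comp <| he.monotone.tendsto_atBot_atBot fun b =>
      ⟨-max (b - m) (m - b) - 1, by simp only [e]; omega⟩, ?_⟩
  have h0 : ∀ n, e (2 * n) = 4 * n + m := fun n => by simp only [e]; omega
  have h1 : ∀ n, e (2 * n + 1) = 4 * n + m + 3 := fun n => by simp only [e]; omega
  simp only [blockUnion, Function.comp, h0, h1]
  rfl

theorem ratIoo_subset_blockUnion {c : ℤ → ℝ} (hc : StrictMono c) {k m : ℤ} (h : (k - m) % 4 ≠ 3) :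
    ratIoo (c k) (c (k + 1)) ⊆ blockUnion c m :=
  fun _ hq => mem_iUnion.2 ⟨(k - m) / 4, (hc.monotone (by omega)).trans_lt hq.1,
    hq.2.trans_le (hc.monotone (by omega))⟩

namespace OrderIso

variable (g : ℚ ≃o ℚ)

noncomputable def extendReal (x : ℝ) : ℝ :=
  sSup ((fun q : ℚ => (g q : ℝ)) '' {q : ℚ | (q : ℝ) < x})

theorem lt_extendReal_iff (r : ℚ) (x : ℝ) : (r : ℝ) < g.extendReal x ↔ (g.symm r : ℝ) < x := by
  obtain ⟨p, hxp⟩ := exists_rat_gt x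
  obtain ⟨p', hp'x⟩ := exists_rat_lt x
  have hbdd : BddAbove ((fun q : ℚ => (g q : ℝ)) '' {q : ℚ | (q : ℝ) < x}) := by
    refine ⟨g p, ?_⟩
    rintro _ ⟨q, hq, rfl⟩
    exact Rat.cast_le.2 (g.monotone (Rat.cast_le.1 (hq.trans hxp).le))
  rw [extendReal, lt_csSup_iff hbdd ⟨_, p', hp'x, rfl⟩]
  constructor
  · rintro ⟨_, ⟨q, hq, rfl⟩, hrq⟩
    exact (Rat.cast_lt.2 (g.symm_apply_lt.2 (Rat.cast_lt.1 hrq))).trans hq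
  · intro h
    obtain ⟨q, hrq, hqx⟩ := exists_rat_btwn h
    exact ⟨_, ⟨q, hqx, rfl⟩, Rat.cast_lt.2 (g.symm_apply_lt.1 (Rat.cast_lt.1 hrq))⟩

theorem extendReal_lt_of_lt {x : ℝ} {q : ℚ} (h : x < q) : g.extendReal x < g q := by
  obtain ⟨s, hxs, hsq⟩ := exists_rat_btwn h
  refine lt_of_le_of_lt (not_lt.1 fun h' => ?_) (Rat.cast_lt.2 (g.strictMono (Rat.cast_lt.1 hsq)))
  rw [lt_extendReal_iff, symm_apply_apply] at h'
  exact h'.not_gt hxs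

theorem extendReal_lt_iff {x : ℝ} (hx : Irrational x) (q : ℚ) :
    g.extendReal x < g q ↔ x < q := by
  refine ⟨fun h => lt_of_le_of_ne (not_lt.1 fun hqx => ?_) (hx.ne_rat q), g.extendReal_lt_of_lt⟩
  rw [← g.symm_apply_apply q, ← lt_extendReal_iff] at hqx
  exact h.not_gt hqx

theorem irrational_extendReal {x : ℝ} (hx : Irrational x) : Irrational (g.extendReal x) := by
  rintro ⟨r, hr⟩
  obtain ⟨q, rfl⟩ := g.surjective r
  rcases lt_trichotomy x q with h | h | h
  · exact (g.extendReal_lt_of_lt h).ne' hr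
  · exact hx.ne_rat q h
  · exact ((g.lt_extendReal_iff (g q) x).2 (by rwa [symm_apply_apply])).ne hr

theorem strictMono_extendReal : StrictMono g.extendReal := by
  intro x y hxy
  obtain ⟨s, hxs, hsy⟩ := exists_rat_btwn hxy
  refine (g.extendReal_lt_of_lt hxs).trans ?_
  rwa [lt_extendReal_iff, symm_apply_apply]

theorem apply_mem_ratIoo_extendReal_iff {a b : ℝ} (ha : Irrational a) (q : ℚ) :
    g q ∈ ratIoo (g.extendReal a) (g.extendReal b) ↔ q ∈ ratIoo a b := by
  simp only [ratIoo, mem_preimage, mem_Ioo, g.extendReal_lt_iff ha, lt_extendReal_iff,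
    symm_apply_apply]

noncomputable def restrictRatIoo {a b : ℝ} (ha : Irrational a) :
    ratIoo a b ≃o ratIoo (g.extendReal a) (g.extendReal b) where
  toEquiv := g.toEquiv.subtypeEquiv fun q => (g.apply_mem_ratIoo_extendReal_iff ha q).symm
  map_rel_iff' := g.le_iff_le

end OrderIso

theorem exists_int_chain {α : Type*} [Nonempty α] {R : α → α → Prop} (hf : ∀ x, ∃ y, R x y)
    (hb : ∀ y, ∃ x, R x y) : ∃ u : ℤ → α, ∀ k, R (u k) (u (k + 1)) := by
  choose f hf using hf
  choose b hb using hb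
  obtain ⟨a⟩ := ‹Nonempty α›
  set u : ℤ → α := fun k => if 0 ≤ k then f^[k.toNat] a else b^[(-k).toNat] a
  have hu_nonneg : ∀ k, 0 ≤ k → u k = f^[k.toNat] a := fun k hk => if_pos hk
  have hu_nonpos : ∀ k ≤ 0, u k = b^[(-k).toNat] a := by
    intro k hk
    rcases hk.lt_or_eq with hk | rfl
    · exact if_neg hk.not_ge
    · exact if_pos le_rfl
  refine ⟨u, fun k => ?_⟩
  rcases le_or_gt 0 k with hk | hk
  · rw [hu_nonneg k hk, hu_nonneg (k + 1) (by omega), show (k + 1).toNat = k.toNat + 1 by omega,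
      Function.iterate_succ_apply']
    exact hf _
  · rw [hu_nonpos k hk.le, hu_nonpos (k + 1) hk, show (-k).toNat = (-(k + 1)).toNat + 1 by omega,
      Function.iterate_succ_apply']
    exact hb _

theorem exists_isIrrationalPartition_extendReal (g : ℚ ≃o ℚ) :
    ∃ d : ℤ → ℝ, IsIrrationalPartition d ∧
      ∀ k, g.extendReal (d k) < d (k + 1) ∧ d k < g.extendReal (d (k + 1)) := by
  have : Nonempty {x : ℝ // Irrational x} := ⟨⟨_, irrational_sqrt_two⟩⟩
  obtain ⟨u, hu⟩ := exists_int_chain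
    (R := fun x y : {x : ℝ // Irrational x} =>
      (x : ℝ) + 1 < y ∧ g.extendReal x < y ∧ (x : ℝ) < g.extendReal y)
    (fun x => by
      obtain ⟨s, hxs⟩ := exists_rat_gt (x : ℝ)
      obtain ⟨y, hy, hMy, -⟩ := exists_irrational_btwn
        (lt_add_one (max ((x : ℝ) + 1) (max (g.extendReal x) (g.symm s))))
      simp only [max_lt_iff] at hMy
      refine ⟨⟨y, hy⟩, hMy.1, hMy.2.1, hxs.trans ?_⟩
      exact (g.lt_extendReal_iff s y).2 hMy.2.2)
    (fun y => by
      obtain ⟨t, hty⟩ := exists_rat_lt (y : ℝ)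
      obtain ⟨x, hx, -, hxM⟩ := exists_irrational_btwn
        (sub_one_lt (min ((y : ℝ) - 1) (min (g.symm t : ℝ) (g t))))
      simp only [lt_min_iff] at hxM
      refine ⟨⟨x, hx⟩, by linarith [hxM.1], ?_, hxM.2.2.trans ?_⟩
      · simpa using (g.extendReal_lt_of_lt hxM.2.1).trans (by simpa using hty)
      · rwa [g.lt_extendReal_iff, OrderIso.symm_apply_apply])
  exact ⟨fun k => u k, .of_add_one_le (fun k => (u k).2) (fun k => (hu k).1.le),
    fun k => (hu k).2⟩

section TargetCuts

variable (g : ℚ ≃o ℚ) {d : ℤ → ℝ}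

noncomputable def targetCuts (d : ℤ → ℝ) (k : ℤ) : ℝ :=
  if k % 4 = 1 ∨ k % 4 = 2 then g.extendReal (d k) else d k

variable (hd : IsIrrationalPartition d)
  (hgd : ∀ k, g.extendReal (d k) < d (k + 1) ∧ d k < g.extendReal (d (k + 1)))
include hd hgd

theorem isIrrationalPartition_targetCuts : IsIrrationalPartition (targetCuts g d) := by
  have hbounds : ∀ k, d (k - 1) ≤ targetCuts g d k ∧ targetCuts g d k ≤ d (k + 1) := by
    intro k
    unfold targetCuts
    split_ifs
    · have := (hgd (k - 1)).2
      rw [sub_add_cancel] at this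
      exact ⟨this.le, (hgd k).1.le⟩
    · exact ⟨hd.strictMono.monotone (by omega), hd.strictMono.monotone (by omega)⟩
  refine ⟨fun k => ?_, strictMono_int_of_lt_succ fun k => ?_,
    tendsto_atTop_mono (fun k => (hbounds k).1) ?_, tendsto_atBot_mono (fun k => (hbounds k).2) ?_⟩
  · unfold targetCuts
    split_ifs
    exacts [g.irrational_extendReal (hd.irrational k), hd.irrational k]
  · unfold targetCuts
    split_ifs
    exacts [g.strictMono_extendReal (hd.strictMono (lt_add_one k)), (hgd k).1, (hgd k).2,
      hd.strictMono (lt_add_one k)]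
  · exact hd.tendsto_atTop.comp (tendsto_atTop_add_const_right _ (-1) tendsto_id)
  · exact hd.tendsto_atBot.comp (tendsto_atBot_add_const_right _ 1 tendsto_id)

theorem exists_orderIso_ratIoo_targetCuts :
    ∃ e : ∀ k, ratIoo (d k) (d (k + 1)) ≃o ratIoo (targetCuts g d k) (targetCuts g d (k + 1)),
      (∀ k, k % 4 = 1 → ∀ x, (e k x : ℚ) = g x) ∧ (∀ k, k % 4 = 3 → ∀ x, (e k x : ℚ) = x) := by
  have : ∀ k, ∃ e : ratIoo (d k) (d (k + 1)) ≃o ratIoo (targetCuts g d k) (targetCuts g d (k + 1)),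
      (k % 4 = 1 → ∀ x, (e x : ℚ) = g x) ∧ (k % 4 = 3 → ∀ x, (e x : ℚ) = x) := by
    intro k
    by_cases h1 : k % 4 = 1
    · have hcuts : ratIoo (g.extendReal (d k)) (g.extendReal (d (k + 1))) =
          ratIoo (targetCuts g d k) (targetCuts g d (k + 1)) := by
        rw [targetCuts, targetCuts, if_pos (by omega), if_pos (by omega)]
      exact ⟨(g.restrictRatIoo (hd.irrational k)).trans (OrderIso.setCongr _ _ hcuts),
        fun _ _ => rfl, by omega⟩
    by_cases h3 : k % 4 = 3
    · have hcuts : ratIoo (d k) (d (k + 1)) =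
          ratIoo (targetCuts g d k) (targetCuts g d (k + 1)) := by
        rw [targetCuts, targetCuts, if_neg (by omega), if_neg (by omega)]
      exact ⟨OrderIso.setCongr _ _ hcuts, by omega, fun _ _ => rfl⟩
    obtain ⟨e⟩ := ratIoo.nonempty_orderIso (hd.strictMono (lt_add_one k))
      ((isIrrationalPartition_targetCuts g hd hgd).strictMono (lt_add_one k))
    exact ⟨e, by omega, by omega⟩
  choose e he using this
  exact ⟨e, fun k => (he k).1, fun k => (he k).2⟩

end TargetCuts

/-- Truss' lemma: `Aut(ℚ,<) = ⋃_{X,Y ∈ 𝒟} A(X)·A(Y)`. -/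
theorem autQ_eq_union_AX_AY (g : ℚ ≃o ℚ) :
    ∃ X Y : Set ℚ, MemD X ∧ MemD Y ∧
      ∃ a ∈ A X, ∃ b ∈ A Y, g = a * b := by
  obtain ⟨d, hd, hgd⟩ := exists_isIrrationalPartition_extendReal g
  obtain ⟨e, he_g, he_id⟩ := exists_orderIso_ratIoo_targetCuts g hd hgd
  obtain ⟨F, hF⟩ := hd.exists_orderIso_apply_eq (isIrrationalPartition_targetCuts g hd hgd) e
  refine ⟨blockUnion d 0, blockUnion d 2, hd.memD_blockUnion 0, hd.memD_blockUnion 2,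
    F, fun q hq => ?_, F⁻¹ * g, fun q hq => ?_, (mul_inv_cancel_left F g).symm⟩
  · obtain ⟨k, hk⟩ := hd.exists_mem_ratIoo q
    have h3 : k % 4 = 3 := by
      by_contra h
      exact hq (ratIoo_subset_blockUnion hd.strictMono (by omega) hk)
    rw [hF k q hk, he_id k h3]
  · obtain ⟨k, hk⟩ := hd.exists_mem_ratIoo q
    have h1 : k % 4 = 1 := by
      by_contra h
      exact hq (ratIoo_subset_blockUnion hd.strictMono (by omega) hk)
    have hFq : F q = g q := by rw [hF k q hk, he_g k h1]
    change F.symm (g q) = q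
    rw [← hFq, OrderIso.symm_apply_apply]
end
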